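/- Let m ≥ 3 and fix d = (d_1, ..., d_m) ∈ ℕ^m with Σ d_i even, satisfying Σ_{i=2}^m d_i ≥ d_1 and d_1 + d_ℓ ≥ Σ_{i=2, i≠ℓ}^m d_i for every 2 ≤ ℓ ≤ m. Then the number of loopless multigraphs on vertices v_1,...,v_m with degree sequence d equals C((−d_1 + d_2 + ... + d_m)/2 + C(m−1,2) − 1, C(m−1,2) − 1). -/

import Mathlib

open Finset

/-! Deleting the least vertex `o` leaves an arbitrary multigraph `y` on the other vertices with
`s = e - d o` edges, `e` the number of edges. Conversely `y` extends in exactly one way: the edge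
`oℓ` must get multiplicity `d ℓ - deg_y ℓ`, which is legitimate because `deg_y ℓ ≤ s ≤ d ℓ`
(`s ≤ d ℓ` is the inequality `∑_{i ≠ o, ℓ} d i ≤ d o + d ℓ`), and the handshake lemma then
forces the degree of `o` to be `d o`. So the count is the number of ways to spread `s` edges over the `C(m - 1, 2)` pairs
of other vertices, which stars and bars gives as `C(s + C(m - 1, 2) - 1, C(m - 1, 2) - 1)`. -/

theorem natCard_sum_eq_choose (β : Type*) [Fintype β] (n : ℕ) :
    Nat.card {f : β → ℕ // ∑ b, f b = n} = (Fintype.card β + n - 1).choose n := by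
  classical
  rw [← Nat.card_congr (Sym.equivNatSumOfFintype β n), Nat.card_eq_fintype_card,
    Sym.card_sym_eq_choose]

namespace LooplessMultigraph

abbrev Edge (α : Type*) [LT α] : Type _ := {p : α × α // p.1 < p.2}

variable {α : Type*} [LinearOrder α] {o : α}

theorem snd_ne_of_isBot (ho : IsBot o) (p : Edge α) : p.1.2 ≠ o :=
  ((ho _).trans_lt p.2).ne'

def sumEdgeEquiv (ho : IsBot o) : {i // i ≠ o} ⊕ Edge {i // i ≠ o} ≃ Edge α where
  toFun
    | .inl ℓ => ⟨(o, ℓ), (ho ℓ).lt_of_ne ℓ.2.symm⟩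
    | .inr q => ⟨(q.1.1, q.1.2), q.2⟩
  invFun p :=
    if h : p.1.1 = o then .inl ⟨p.1.2, snd_ne_of_isBot ho p⟩
    else .inr ⟨(⟨p.1.1, h⟩, ⟨p.1.2, snd_ne_of_isBot ho p⟩), p.2⟩
  left_inv
    | .inl ℓ => by simp
    | .inr q => by simp [q.1.1.2]
  right_inv
    | ⟨(a, b), _⟩ => by
      by_cases h : a = o
      · subst h; simp
      · simp [h]

variable [Fintype α]

theorem card_edge : Fintype.card (Edge α) = (Fintype.card α).choose 2 := by
  classical
  let e : {a : Sym2 α // ¬ a.IsDiag} ≃ Edge α :=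
    (Sym2.sortEquiv.subtypeEquiv (q := fun b => b.val.1 < b.val.2) fun a => by
      induction a using Sym2.ind with
      | _ x y => simp [eq_comm]).trans
      (Equiv.subtypeSubtypeEquivSubtype fun {x} h => le_of_lt h)
  rw [← Fintype.card_congr e, Sym2.card_subtype_not_diag]

def degree (x : Edge α → ℕ) (j : α) : ℕ :=
  ∑ p : Edge α, if p.1.1 = j ∨ p.1.2 = j then x p else 0

theorem degree_le_sum (x : Edge α → ℕ) (j : α) : degree x j ≤ ∑ p, x p :=
  sum_le_sum fun p _ => by split <;> simp

theorem sum_degree (x : Edge α → ℕ) : ∑ j, degree x j = 2 * ∑ p, x p := by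
  simp only [degree]
  rw [sum_comm, mul_sum]
  refine sum_congr rfl fun p _ => ?_
  have hends : univ.filter (fun j => p.1.1 = j ∨ p.1.2 = j) = {p.1.1, p.1.2} := by
    ext j; simp [eq_comm]
  rw [sum_ite, sum_const_zero, add_zero, sum_const, hends, card_pair p.2.ne, smul_eq_mul]

theorem degree_bot (ho : IsBot o) (x : Edge α → ℕ) :
    degree x o = ∑ ℓ, x (sumEdgeEquiv ho (.inl ℓ)) := by
  rw [degree, ← (sumEdgeEquiv ho).sum_comp, Fintype.sum_sum_type]
  simp +contextual [sumEdgeEquiv]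

theorem degree_of_ne (ho : IsBot o) (x : Edge α → ℕ) (ℓ : {i // i ≠ o}) :
    degree x ℓ = x (sumEdgeEquiv ho (.inl ℓ)) + degree (x ∘ sumEdgeEquiv ho ∘ .inr) ℓ := by
  rw [degree, ← (sumEdgeEquiv ho).sum_comp, Fintype.sum_sum_type]
  simp [sumEdgeEquiv, degree, ℓ.2.symm, Subtype.coe_inj]

theorem two_mul_sum_inner_add_degree_bot (ho : IsBot o) (x : Edge α → ℕ) :
    2 * ∑ q, (x ∘ sumEdgeEquiv ho ∘ .inr) q + degree x o = ∑ ℓ : {i // i ≠ o}, degree x ℓ := by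
  simp only [degree_of_ne ho, sum_add_distrib, sum_degree, degree_bot ho]
  ring

def extendByBot (ho : IsBot o) (d : α → ℕ) (y : Edge {i // i ≠ o} → ℕ) : Edge α → ℕ :=
  fun p => Sum.elim (fun ℓ : {i // i ≠ o} => d ℓ - degree y ℓ) y ((sumEdgeEquiv ho).symm p)

theorem extendByBot_inl (ho : IsBot o) (d : α → ℕ) (y : Edge {i // i ≠ o} → ℕ)
    (ℓ : {i // i ≠ o}) : extendByBot ho d y (sumEdgeEquiv ho (.inl ℓ)) = d ℓ - degree y ℓ := by
  simp [extendByBot]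

theorem extendByBot_comp_inr (ho : IsBot o) (d : α → ℕ) (y : Edge {i // i ≠ o} → ℕ) :
    extendByBot ho d y ∘ sumEdgeEquiv ho ∘ .inr = y := by
  ext q; simp [extendByBot]

def degreeEqEquiv (ho : IsBot o) (d : α → ℕ) (s : ℕ) (hs : 2 * s + 2 * d o = ∑ i, d i)
    (hsd : ∀ ℓ, ℓ ≠ o → s ≤ d ℓ) :
    {x : Edge α → ℕ // ∀ j, degree x j = d j} ≃ {y : Edge {i // i ≠ o} → ℕ // ∑ q, y q = s} where
  toFun x := ⟨x.1 ∘ sumEdgeEquiv ho ∘ .inr, by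
    have hx := two_mul_sum_inner_add_degree_bot ho x.1
    have hd := Fintype.sum_eq_add_sum_subtype_ne d o
    simp only [x.2] at hx
    omega⟩
  invFun y := ⟨extendByBot ho d y, by
    have hdeg (ℓ : {i // i ≠ o}) : degree (extendByBot ho d y) ℓ = d ℓ := by
      rw [degree_of_ne ho, extendByBot_inl, extendByBot_comp_inr]
      -- `degree y ℓ ≤ s ≤ d ℓ`, so the subtraction in `extendByBot` does not truncate
      exact Nat.sub_add_cancel ((degree_le_sum y ℓ).trans (by rw [y.2]; exact hsd ℓ ℓ.2))
    intro j
    by_cases hj : j = o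
    · subst hj
      have hx := two_mul_sum_inner_add_degree_bot ho (extendByBot ho d y)
      have hd := Fintype.sum_eq_add_sum_subtype_ne d j
      rw [extendByBot_comp_inr, y.2] at hx
      simp only [hdeg] at hx
      omega
    · exact hdeg ⟨j, hj⟩⟩
  left_inv x := by
    ext p
    dsimp only
    obtain ⟨ℓ | q, rfl⟩ := (sumEdgeEquiv ho).surjective p
    · have hℓ := degree_of_ne ho x.1 ℓ
      rw [x.2] at hℓ
      rw [extendByBot_inl]
      omega
    · exact congrFun (extendByBot_comp_inr ho d _) q
  right_inv y := Subtype.ext (extendByBot_comp_inr ho d y.1)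

theorem card_degree_eq_choose (ho : IsBot o) (d : α → ℕ) (heven : Even (∑ i, d i))
    (h1 : d o ≤ ∑ i ∈ univ.erase o, d i)
    (h2 : ∀ ℓ, ℓ ≠ o → ∑ i ∈ (univ.erase o).erase ℓ, d i ≤ d o + d ℓ) :
    Nat.card {x : Edge α → ℕ // ∀ j, degree x j = d j} =
      ((Fintype.card α - 1).choose 2 + ((∑ i, d i) - 2 * d o) / 2 - 1).choose
        (((∑ i, d i) - 2 * d o) / 2) := by
  set s := ((∑ i, d i) - 2 * d o) / 2 with hs_def
  have hsum := add_sum_erase univ d (mem_univ o)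
  have hs : 2 * s + 2 * d o = ∑ i, d i := by
    obtain ⟨t, ht⟩ := heven
    omega
  have hsd (ℓ : α) (hℓ : ℓ ≠ o) : s ≤ d ℓ := by
    have hsplit := add_sum_erase (univ.erase o) d (mem_erase.2 ⟨hℓ, mem_univ ℓ⟩)
    have h2ℓ := h2 ℓ hℓ
    omega
  rw [Nat.card_congr (degreeEqEquiv ho d s hs hsd), natCard_sum_eq_choose, card_edge,
    Fintype.card_subtype_compl, Fintype.card_subtype_eq]

end LooplessMultigraph

open LooplessMultigraph in
/-- For `m ≥ 3` and a degree sequence `d` with even sum satisfying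
`Σ_{i≥2} dᵢ ≥ d₁` and `d₁ + dₗ ≥ Σ_{i≥2, i≠ℓ} dᵢ` for all `ℓ ≥ 2`, the number of
loopless multigraphs with degree sequence `d` is
`C((-d₁ + d₂ + ⋯ + d_m)/2 + C(m-1,2) - 1, C(m-1,2) - 1)`. -/
theorem stmt19 (m : ℕ) (hm : 3 ≤ m) (d : Fin m → ℕ) (heven : Even (∑ i, d i))
    (h1 : d ⟨0, by omega⟩ ≤ ∑ i ∈ Finset.univ.erase (⟨0, by omega⟩ : Fin m), d i)
    (h2 : ∀ ℓ : Fin m, ℓ ≠ ⟨0, by omega⟩ →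
      ∑ i ∈ (Finset.univ.erase (⟨0, by omega⟩ : Fin m)).erase ℓ, d i ≤
        d ⟨0, by omega⟩ + d ℓ) :
    Nat.card {x : {p : Fin m × Fin m // p.1 < p.2} → ℕ //
        ∀ j : Fin m,
          (∑ p : {p : Fin m × Fin m // p.1 < p.2},
            if p.val.1 = j ∨ p.val.2 = j then x p else 0) = d j} =
      (((∑ i, d i) - 2 * d ⟨0, by omega⟩) / 2 + (m - 1).choose 2 - 1).choose
        ((m - 1).choose 2 - 1) := by
  have ho : IsBot (⟨0, by omega⟩ : Fin m) := fun i => Nat.zero_le i.val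
  have hC : 1 ≤ (m - 1).choose 2 := Nat.choose_pos (by omega)
  have hcard := card_degree_eq_choose ho d heven h1 h2
  rw [Fintype.card_fin] at hcard
  refine hcard.trans ?_
  rw [add_comm ((m - 1).choose 2)]
  exact Nat.choose_symm_of_eq_add (by omega)
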